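/- Let τ≥0, c∈ℝ, C₀>0 and let u:ℝ→ℝ be a bounded continuous function with 0 ≤ u(x) ≤ C₀ for all x. Define v(x) = ∫₀^∞ ∫_ℝ (e^{−s}/√(4πs)) e^{−(x−z)²/(4s)} u(z+τcs) dz ds. Then for every x∈ℝ: 0 ≤ v(x) ≤ C₀; moreover v is differentiable on ℝ and |v'(x)| ≤ C₀/2 for every x∈ℝ. -/

import Mathlib

/-!
With `G_s` the heat kernel and `u_s = u (· + τ c s)`, `v x = ∫₀^∞ e^{-s} (G_s ∗ u_s) x ds`.
Since `G_s` is a probability density, every slice `G_s ∗ u_s` takes values in `[0, C₀]`, hence so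
does `v`. Differentiating under both integrals, the slice derivative is `∫ G_s' (x - z) u_s z dz`;
as `G_s'` has mean zero, `u_s` may be replaced by `u_s - C₀ / 2`, which bounds it by
`C₀ / 2 * ‖G_s'‖₁ = C₀ / 2 / √(π s)`, and `∫₀^∞ e^{-s} / √(π s) ds = Γ(1/2) / √π = 1`.
-/

open Real MeasureTheory Set

/-- `v(x) = ∫₀^∞ ∫_ℝ (e^{−s}/√(4πs)) e^{−(x−z)²/(4s)} u(z+τcs) dz ds`. -/
noncomputable def vInt (τ c : ℝ) (u : ℝ → ℝ) (x : ℝ) : ℝ :=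
  ∫ s in Ioi (0:ℝ), ∫ z : ℝ,
    (Real.exp (-s) / Real.sqrt (4 * π * s)) * Real.exp (-(x - z) ^ 2 / (4 * s))
      * u (z + τ * c * s)

open Filter Function Topology

lemma abs_integral_mul_le_of_integral_eq_zero {α : Type*} [MeasurableSpace α] {μ : Measure α}
    {k g : α → ℝ} {m r : ℝ} (hk : Integrable k μ) (hk0 : ∫ a, k a ∂μ = 0)
    (hg : AEStronglyMeasurable g μ) (hgr : ∀ᵐ a ∂μ, |g a - m| ≤ r) :
    |∫ a, k a * g a ∂μ| ≤ r * ∫ a, |k a| ∂μ := by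
  have hcent : Integrable (fun a => k a * (g a - m)) μ :=
    hk.mul_bdd (hg.sub aestronglyMeasurable_const) (c := r) hgr
  have hsplit : ∫ a, k a * g a ∂μ = ∫ a, k a * (g a - m) ∂μ := by
    rw [← add_zero (∫ a, k a * (g a - m) ∂μ), ← mul_zero m, ← hk0, ← integral_const_mul,
      ← integral_add hcent (hk.const_mul m)]
    simp only [mul_sub]
    ring_nf
  rw [hsplit, ← integral_const_mul, ← norm_eq_abs]
  refine norm_integral_le_of_norm_le (hk.abs.const_mul r) (hgr.mono fun a ha => ?_)
  rw [norm_mul, norm_eq_abs, norm_eq_abs, mul_comm r]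
  exact mul_le_mul_of_nonneg_left ha (abs_nonneg _)

lemma eqOn_exp_neg_mul_inv_sqrt :
    EqOn (fun s => exp (-s) * (√(π * s))⁻¹) (fun s => (√π)⁻¹ * (exp (-s) * s ^ ((1 : ℝ) / 2 - 1)))
      (Ioi 0) := by
  intro s (hs : 0 < s)
  dsimp only
  rw [show (1 : ℝ) / 2 - 1 = -(1 / 2) by norm_num, rpow_neg hs.le, ← sqrt_eq_rpow,
    sqrt_mul pi_pos.le, mul_inv]
  ring

lemma integrableOn_exp_neg_mul_inv_sqrt :
    IntegrableOn (fun s => exp (-s) * (√(π * s))⁻¹) (Ioi 0) :=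
  IntegrableOn.congr_fun ((GammaIntegral_convergent one_half_pos).const_mul _)
    eqOn_exp_neg_mul_inv_sqrt.symm measurableSet_Ioi

lemma integral_exp_neg_mul_inv_sqrt : ∫ s in Ioi 0, exp (-s) * (√(π * s))⁻¹ = 1 := by
  rw [setIntegral_congr_fun measurableSet_Ioi eqOn_exp_neg_mul_inv_sqrt, integral_const_mul,
    ← Gamma_eq_integral one_half_pos, Gamma_one_half_eq,
    inv_mul_cancel₀ (sqrt_pos.2 pi_pos).ne']

lemma stronglyMeasurable_integral_sub_mul {k g : ℝ → ℝ → ℝ} (hk : Measurable (uncurry k))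
    (hg : Measurable (uncurry g)) (x : ℝ) :
    StronglyMeasurable fun s => ∫ z, k s (x - z) * g s z :=
  StronglyMeasurable.integral_prod_right
    ((hk.comp (measurable_fst.prodMk (measurable_const.sub measurable_snd))).mul
      hg).stronglyMeasurable

noncomputable def heatKernel (s y : ℝ) : ℝ := exp (-y ^ 2 / (4 * s)) / √(4 * π * s)

noncomputable def heatKernelDeriv (s y : ℝ) : ℝ := -(y / (2 * s)) * heatKernel s y

noncomputable def heatFlow (s : ℝ) (g : ℝ → ℝ) (x : ℝ) : ℝ := ∫ z, heatKernel s (x - z) * g z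

lemma heatKernel_nonneg (s y : ℝ) : 0 ≤ heatKernel s y := by unfold heatKernel; positivity

lemma heatKernel_eq_gaussian (s y : ℝ) :
    heatKernel s y = (√(4 * π * s))⁻¹ * exp (-(4 * s)⁻¹ * y ^ 2) := by
  unfold heatKernel; rw [div_eq_inv_mul]; congr 2; ring

lemma measurable_uncurry_heatKernel : Measurable (uncurry heatKernel) := by
  unfold heatKernel; fun_prop

lemma measurable_uncurry_heatKernelDeriv : Measurable (uncurry heatKernelDeriv) := by
  unfold heatKernelDeriv heatKernel; fun_prop

lemma hasDerivAt_heatKernel (s y : ℝ) : HasDerivAt (heatKernel s) (heatKernelDeriv s y) y := by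
  have h := ((hasDerivAt_pow 2 y).const_mul (-(4 * s)⁻¹)).exp.const_mul (√(4 * π * s))⁻¹
  simp only [← heatKernel_eq_gaussian] at h
  refine h.congr_deriv ?_
  rw [heatKernelDeriv, heatKernel_eq_gaussian]
  ring

lemma integrable_heatKernel {s : ℝ} (hs : 0 < s) : Integrable (heatKernel s) := by
  rw [funext (heatKernel_eq_gaussian s)]
  exact (integrable_exp_neg_mul_sq (by positivity)).const_mul _

lemma integral_heatKernel {s : ℝ} (hs : 0 < s) : ∫ y, heatKernel s y = 1 := by
  rw [funext (heatKernel_eq_gaussian s), integral_const_mul, integral_gaussian, div_inv_eq_mul,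
    show π * (4 * s) = 4 * π * s by ring, inv_mul_cancel₀ (by positivity)]

lemma integrable_heatKernelDeriv {s : ℝ} (hs : 0 < s) : Integrable (heatKernelDeriv s) := by
  refine ((integrable_mul_exp_neg_mul_sq (b := (4 * s)⁻¹) (by positivity)).const_mul
    (-(2 * s)⁻¹ * (√(4 * π * s))⁻¹)).congr (ae_of_all _ fun y => ?_)
  simp only [heatKernelDeriv, heatKernel_eq_gaussian]
  ring

lemma integral_heatKernelDeriv {s : ℝ} (hs : 0 < s) : ∫ y, heatKernelDeriv s y = 0 :=
  integral_eq_zero_of_hasDerivAt_of_integrable (hasDerivAt_heatKernel s)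
    (integrable_heatKernelDeriv hs) (integrable_heatKernel hs)

lemma integral_abs_heatKernelDeriv {s : ℝ} (hs : 0 < s) :
    ∫ y, |heatKernelDeriv s y| = 2 * heatKernel s 0 := by
  have heven : ∀ y, |heatKernelDeriv s y| = -heatKernelDeriv s |y| := by
    intro y
    have hK : heatKernel s |y| = heatKernel s y := by rw [heatKernel, heatKernel, sq_abs]
    rw [heatKernelDeriv, heatKernelDeriv, hK, abs_mul, abs_neg, abs_div,
      abs_of_pos (by positivity : 0 < 2 * s), abs_of_nonneg (heatKernel_nonneg s y)]
    ring
  have hlim : Tendsto (heatKernel s) atTop (𝓝 0) :=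
    tendsto_zero_of_hasDerivAt_of_integrableOn_Ioi (a := 0) (fun y _ => hasDerivAt_heatKernel s y)
      (integrable_heatKernelDeriv hs).integrableOn (integrable_heatKernel hs).integrableOn
  rw [integral_congr_ae (ae_of_all _ heven), integral_comp_abs (f := fun y => -heatKernelDeriv s y),
    integral_neg, integral_Ioi_of_hasDerivAt_of_tendsto' (fun y _ => hasDerivAt_heatKernel s y)
      (integrable_heatKernelDeriv hs).integrableOn hlim]
  ring

lemma exists_integrable_bound_heatKernelDeriv {s : ℝ} (hs : 0 < s) :
    ∃ G : ℝ → ℝ, Integrable G ∧ ∀ y h, |h| < 1 → |heatKernelDeriv s (y + h)| ≤ G y := by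
  have hb : 0 < (8 * s)⁻¹ := by positivity
  set C := (2 * s)⁻¹ * (√(4 * π * s))⁻¹ * exp (4 * s)⁻¹
  refine ⟨fun y => C * ((|y| + 1) * exp (-(8 * s)⁻¹ * y ^ 2)), ?_, fun y h hh => ?_⟩
  · refine (((integrable_mul_exp_neg_mul_sq hb).abs.add (integrable_exp_neg_mul_sq hb)).const_mul
      C).congr (ae_of_all _ fun y => ?_)
    simp only [Pi.add_apply, abs_mul, abs_exp]
    ring
  · have hlin : |y + h| ≤ |y| + 1 := (abs_add_le y h).trans (by linarith)
    have hexp : exp (-(4 * s)⁻¹ * (y + h) ^ 2) ≤ exp (4 * s)⁻¹ * exp (-(8 * s)⁻¹ * y ^ 2) := by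
      rw [← exp_add, exp_le_exp]
      -- `(y + h)² - (y² / 2 - h²) = (y + 2h)² / 2`
      have hsq : y ^ 2 / 2 - 1 ≤ (y + h) ^ 2 := by
        nlinarith [sq_nonneg (y + 2 * h), abs_lt.1 hh, sq_abs h, abs_nonneg h]
      have h4 : (8 * s)⁻¹ = (4 * s)⁻¹ / 2 := by field_simp; ring
      rw [h4]
      nlinarith [inv_pos.2 (by positivity : 0 < 4 * s)]
    rw [heatKernelDeriv, heatKernel_eq_gaussian, abs_mul, abs_neg, abs_div,
      abs_of_pos (by positivity : 0 < 2 * s), abs_mul,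
      abs_of_pos (by positivity : 0 < (√(4 * π * s))⁻¹), abs_exp]
    calc |y + h| / (2 * s) * ((√(4 * π * s))⁻¹ * exp (-(4 * s)⁻¹ * (y + h) ^ 2))
        ≤ (|y| + 1) / (2 * s) *
            ((√(4 * π * s))⁻¹ * (exp (4 * s)⁻¹ * exp (-(8 * s)⁻¹ * y ^ 2))) := by
          gcongr
      _ = C * ((|y| + 1) * exp (-(8 * s)⁻¹ * y ^ 2)) := by ring

section heatFlow

variable {s : ℝ} {g : ℝ → ℝ}

lemma integrable_heatKernel_sub_mul (hs : 0 < s) {M : ℝ} (hg : AEStronglyMeasurable g)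
    (hgM : ∀ z, |g z| ≤ M) (x : ℝ) : Integrable fun z => heatKernel s (x - z) * g z :=
  ((integrable_heatKernel hs).comp_sub_left x).mul_bdd hg (c := M) (ae_of_all _ hgM)

lemma heatFlow_mem_Icc (hs : 0 < s) {a b : ℝ} (hg : AEStronglyMeasurable g)
    (hgab : ∀ z, g z ∈ Icc a b) (x : ℝ) : heatFlow s g x ∈ Icc a b := by
  have hint := integrable_heatKernel_sub_mul hs hg
    (fun z => abs_le_max_abs_abs (hgab z).1 (hgab z).2) x
  have hK := (integrable_heatKernel hs).comp_sub_left x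
  have hK1 : ∫ z, heatKernel s (x - z) = 1 := by
    rw [integral_sub_left_eq_self (heatKernel s), integral_heatKernel hs]
  constructor
  · calc a = ∫ z, heatKernel s (x - z) * a := by rw [integral_mul_const, hK1, one_mul]
      _ ≤ heatFlow s g x := integral_mono (hK.mul_const a) hint fun z =>
          mul_le_mul_of_nonneg_left (hgab z).1 (heatKernel_nonneg _ _)
  · calc heatFlow s g x ≤ ∫ z, heatKernel s (x - z) * b := integral_mono hint (hK.mul_const b)
          fun z => mul_le_mul_of_nonneg_left (hgab z).2 (heatKernel_nonneg _ _)
      _ = b := by rw [integral_mul_const, hK1, one_mul]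

lemma hasDerivAt_heatFlow (hs : 0 < s) {M : ℝ} (hg : AEStronglyMeasurable g)
    (hgM : ∀ z, |g z| ≤ M) (x₀ : ℝ) :
    HasDerivAt (heatFlow s g) (∫ z, heatKernelDeriv s (x₀ - z) * g z) x₀ := by
  obtain ⟨G, hGint, hG⟩ := exists_integrable_bound_heatKernelDeriv hs
  refine (hasDerivAt_integral_of_dominated_loc_of_deriv_le (Metric.ball_mem_nhds x₀ one_pos)
    (F' := fun x z => heatKernelDeriv s (x - z) * g z) (bound := fun z => G (x₀ - z) * M)
    (Eventually.of_forall fun x => (integrable_heatKernel_sub_mul hs hg hgM x).aestronglyMeasurable)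
    (integrable_heatKernel_sub_mul hs hg hgM x₀)
    (((integrable_heatKernelDeriv hs).comp_sub_left x₀).aestronglyMeasurable.mul hg)
    (ae_of_all _ fun z x hx => ?_) ((hGint.comp_sub_left x₀).mul_const M)
    (ae_of_all _ fun z x _ => ?_)).2
  · rw [norm_mul, norm_eq_abs, norm_eq_abs, show x - z = (x₀ - z) + (x - x₀) by ring]
    exact mul_le_mul (hG _ _ (by simpa [Real.dist_eq] using hx)) (hgM z) (abs_nonneg _)
      ((abs_nonneg _).trans (hG _ _ (by simpa [Real.dist_eq] using hx)))
  · simpa using ((hasDerivAt_heatKernel s (x - z)).comp x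
      ((hasDerivAt_id x).sub_const z)).mul_const (g z)

lemma abs_integral_heatKernelDeriv_mul_le (hs : 0 < s) {m r : ℝ} (hg : AEStronglyMeasurable g)
    (hgr : ∀ z, |g z - m| ≤ r) (x : ℝ) :
    |∫ z, heatKernelDeriv s (x - z) * g z| ≤ r * (√(π * s))⁻¹ := by
  refine (abs_integral_mul_le_of_integral_eq_zero ((integrable_heatKernelDeriv hs).comp_sub_left x)
    ?_ hg (ae_of_all _ hgr)).trans_eq ?_
  · rw [integral_sub_left_eq_self (heatKernelDeriv s), integral_heatKernelDeriv hs]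
  · rw [integral_sub_left_eq_self (fun y => |heatKernelDeriv s y|),
      integral_abs_heatKernelDeriv hs, heatKernel, show 4 * π * s = 2 ^ 2 * (π * s) by ring,
      sqrt_mul (by positivity), sqrt_sq zero_le_two, zero_pow two_ne_zero, neg_zero, zero_div,
      exp_zero]
    ring

end heatFlow

section timeIntegral

variable {g : ℝ → ℝ → ℝ} {a b : ℝ}

lemma integrableOn_exp_mul_heatFlow (hg : Measurable (uncurry g))
    (hgab : ∀ s z, g s z ∈ Icc a b) (x : ℝ) :
    IntegrableOn (fun s => exp (-s) * heatFlow s (g s) x) (Ioi 0) := by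
  refine Integrable.mono' ((integrableOn_exp_neg_Ioi 0).mul_const (max |a| |b|))
    ((measurable_exp.comp measurable_neg).stronglyMeasurable.mul
      (stronglyMeasurable_integral_sub_mul measurable_uncurry_heatKernel hg x)).aestronglyMeasurable
    ((ae_restrict_iff' measurableSet_Ioi).2 (ae_of_all _ fun s (hs : 0 < s) => ?_))
  have hflow := heatFlow_mem_Icc hs (hg.comp measurable_prodMk_left).aestronglyMeasurable
    (hgab s) x
  rw [norm_mul, norm_eq_abs, norm_eq_abs, abs_exp]
  exact mul_le_mul_of_nonneg_left (abs_le_max_abs_abs hflow.1 hflow.2) (exp_pos _).le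

lemma integral_exp_mul_heatFlow_mem_Icc (hg : Measurable (uncurry g))
    (hgab : ∀ s z, g s z ∈ Icc a b) (x : ℝ) :
    ∫ s in Ioi 0, exp (-s) * heatFlow s (g s) x ∈ Icc a b := by
  have hint := integrableOn_exp_mul_heatFlow hg hgab x
  have hflow : ∀ s ∈ Ioi (0 : ℝ), heatFlow s (g s) x ∈ Icc a b := fun s hs =>
    heatFlow_mem_Icc hs (hg.comp measurable_prodMk_left).aestronglyMeasurable (hgab s) x
  have hexp (c : ℝ) : ∫ s in Ioi 0, exp (-s) * c = c := by
    rw [integral_mul_const, integral_exp_neg_Ioi_zero, one_mul]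
  constructor
  · calc a = ∫ s in Ioi 0, exp (-s) * a := (hexp a).symm
      _ ≤ _ := setIntegral_mono_on ((integrableOn_exp_neg_Ioi 0).mul_const a) hint
          measurableSet_Ioi fun s hs => mul_le_mul_of_nonneg_left (hflow s hs).1 (exp_pos _).le
  · calc _ ≤ ∫ s in Ioi 0, exp (-s) * b := setIntegral_mono_on hint
          ((integrableOn_exp_neg_Ioi 0).mul_const b) measurableSet_Ioi
          fun s hs => mul_le_mul_of_nonneg_left (hflow s hs).2 (exp_pos _).le
      _ = b := hexp b

lemma exists_hasDerivAt_integral_exp_mul_heatFlow (hg : Measurable (uncurry g))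
    (hgab : ∀ s z, g s z ∈ Icc a b) (x₀ : ℝ) :
    ∃ v', HasDerivAt (fun x => ∫ s in Ioi 0, exp (-s) * heatFlow s (g s) x) v' x₀ ∧
      |v'| ≤ (b - a) / 2 := by
  have hgs (s : ℝ) : AEStronglyMeasurable (g s) :=
    (hg.comp measurable_prodMk_left).aestronglyMeasurable
  have hgr (s z : ℝ) : |g s z - (a + b) / 2| ≤ (b - a) / 2 := by
    have := hgab s z
    rw [abs_le]; constructor <;> linarith [this.1, this.2]
  have hgM (s z : ℝ) : |g s z| ≤ max |a| |b| := abs_le_max_abs_abs (hgab s z).1 (hgab s z).2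
  have hbound : ∀ᵐ s ∂volume.restrict (Ioi 0), ∀ x ∈ Metric.ball x₀ 1,
      ‖exp (-s) * ∫ z, heatKernelDeriv s (x - z) * g s z‖ ≤
        (b - a) / 2 * (exp (-s) * (√(π * s))⁻¹) := by
    refine (ae_restrict_iff' measurableSet_Ioi).2 (ae_of_all _ fun s (hs : 0 < s) x _ => ?_)
    rw [norm_mul, norm_eq_abs, norm_eq_abs, abs_exp, mul_left_comm]
    exact mul_le_mul_of_nonneg_left
      (abs_integral_heatKernelDeriv_mul_le hs (hgs s) (hgr s) x) (exp_pos _).le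
  have hbound_int := integrableOn_exp_neg_mul_inv_sqrt.const_mul ((b - a) / 2)
  obtain ⟨-, hderiv⟩ := hasDerivAt_integral_of_dominated_loc_of_deriv_le
    (Metric.ball_mem_nhds x₀ one_pos)
    (Eventually.of_forall fun x => (integrableOn_exp_mul_heatFlow hg hgab x).aestronglyMeasurable)
    (integrableOn_exp_mul_heatFlow hg hgab x₀)
    ((measurable_exp.comp measurable_neg).stronglyMeasurable.mul
      (stronglyMeasurable_integral_sub_mul measurable_uncurry_heatKernelDeriv hg
        x₀)).aestronglyMeasurable
    hbound hbound_int
    ((ae_restrict_iff' measurableSet_Ioi).2 (ae_of_all _ fun s (hs : 0 < s) x _ =>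
      (hasDerivAt_heatFlow hs (hgs s) (hgM s) x).const_mul (exp (-s))))
  refine ⟨_, hderiv, ?_⟩
  calc _ ≤ ∫ s in Ioi 0, (b - a) / 2 * (exp (-s) * (√(π * s))⁻¹) :=
        norm_integral_le_of_norm_le hbound_int
          (hbound.mono fun s hs => hs x₀ (Metric.mem_ball_self one_pos))
    _ = (b - a) / 2 := by rw [integral_const_mul, integral_exp_neg_mul_inv_sqrt, mul_one]

end timeIntegral

lemma vInt_eq_integral_exp_mul_heatFlow (τ c : ℝ) (u : ℝ → ℝ) :
    vInt τ c u = fun x => ∫ s in Ioi 0, exp (-s) * heatFlow s (fun z => u (z + τ * c * s)) x := by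
  ext x
  simp only [vInt, heatFlow, heatKernel, ← integral_const_mul]
  congr with s
  congr with z
  ring

theorem vInt_bounds_general (τ c C₀ : ℝ) (u : ℝ → ℝ) (hucont : Continuous u)
    (hu : ∀ x, 0 ≤ u x ∧ u x ≤ C₀) :
    (∀ x : ℝ, 0 ≤ vInt τ c u x ∧ vInt τ c u x ≤ C₀) ∧
    Differentiable ℝ (vInt τ c u) ∧
    (∀ x : ℝ, |deriv (vInt τ c u) x| ≤ C₀ / 2) := by
  have hg : Measurable (uncurry fun s z => u (z + τ * c * s)) := by
    have := hucont.measurable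
    fun_prop
  have hgC (s z : ℝ) : u (z + τ * c * s) ∈ Icc 0 C₀ := hu _
  have hderiv := exists_hasDerivAt_integral_exp_mul_heatFlow hg hgC
  rw [vInt_eq_integral_exp_mul_heatFlow]
  refine ⟨integral_exp_mul_heatFlow_mem_Icc hg hgC,
    fun x => (hderiv x).choose_spec.1.differentiableAt, fun x => ?_⟩
  obtain ⟨v', hv', hle⟩ := hderiv x
  rw [hv'.deriv]
  simpa only [sub_zero] using hle

/-- if `0 ≤ u ≤ C₀` is bounded continuous, then `0 ≤ v ≤ C₀`, `v` is
differentiable, and `|v'(x)| ≤ C₀/2`. -/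
theorem vInt_bounds (τ c C₀ : ℝ) (hτ : 0 ≤ τ) (hC₀ : 0 < C₀)
    (u : ℝ → ℝ) (hucont : Continuous u) (hubdd : ∃ M, ∀ x, |u x| ≤ M)
    (hu : ∀ x, 0 ≤ u x ∧ u x ≤ C₀) :
    (∀ x : ℝ, 0 ≤ vInt τ c u x ∧ vInt τ c u x ≤ C₀) ∧
    Differentiable ℝ (vInt τ c u) ∧
    (∀ x : ℝ, |deriv (vInt τ c u) x| ≤ C₀ / 2) :=
  vInt_bounds_general τ c C₀ u hucont hu
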